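/- arXiv:1309.3392 — 2 statements merged into one kernel-verified Lean document; each statement's English description precedes it below -/
import Mathlib

section
/- Let k ≥ 2 and let (f_n) be a sequence of holomorphic automorphisms of ℂ^k, each with Jacobian determinant identically 1, converging uniformly on compact subsets of ℂ^k to a map F. Then: (i) F is injective and holomorphic; (ii) f_n^{−1} converges to F^{−1} uniformly on compact subsets of F(ℂ^k); (iii) ‖f_n^{−1}(z)‖ → ∞ uniformly on ℂ^k ∖ F(ℂ^k). -/
open Metric Set Filter Function
open scoped Topology NNReal

/-!
Cauchy estimates upgrade the locally uniform convergence `f n → F` to locally uniform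
convergence of the derivatives, so `F` is holomorphic and `det DF = 1`: `DF` is continuous and
everywhere invertible. A quantitative inverse function theorem then yields, for a compact `K`,
radii `ε, ρ` and a tolerance `δ` such that every map whose derivative is `δ`-close to `DF` on a
neighbourhood of `K` maps `closedBall y ε` onto a set containing the `ρ`-ball about the image of
`y`, for all `y ∈ K`. This applies to `f n` for all large `n` at once. Hence `(f n)⁻¹` maps the
`ρ`-ball about `F y` into the `ε`-ball about `y`: this gives injectivity of `F` (via injectivity
of `f n`) and the convergence `(f n)⁻¹ → F⁻¹`. Finally, if `‖(f n)⁻¹ z‖ ≤ R`, then `z = f n x`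
lies within `ρ` of `F x`, hence in `F(ℂ^k)`.
-/

section HolomorphicLimits

variable {E F : Type*} [NormedAddCommGroup E] [NormedSpace ℂ E]
  [NormedAddCommGroup F] [NormedSpace ℂ F]

theorem norm_fderiv_le_of_forall_mem_closedBall_norm_le {g : E → F} (hg : Differentiable ℂ g)
    {z : E} {r M : ℝ} (hr : 0 < r) (hM : ∀ u ∈ closedBall z r, ‖g u‖ ≤ M) :
    ‖fderiv ℂ g z‖ ≤ M / r := by
  have hM0 : 0 ≤ M := (norm_nonneg _).trans (hM z (mem_closedBall_self hr.le))
  refine ContinuousLinearMap.opNorm_le_bound _ (div_nonneg hM0 hr.le) fun v => ?_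
  rcases eq_or_ne v 0 with rfl | hv
  · simp
  have hv' : 0 < ‖v‖ := norm_pos_iff.mpr hv
  have hline : ∀ t : ℂ, HasDerivAt (fun t : ℂ => g (z + t • v)) (fderiv ℂ g (z + t • v) v) t :=
    fun t => (hg _).hasFDerivAt.comp_hasDerivAt t
      (((hasDerivAt_id t).smul_const v).const_add z |>.congr_deriv (one_smul ℂ v))
  have hdisc := Complex.norm_deriv_le_of_forall_mem_sphere_norm_le (c := 0) (div_pos hr hv')
    (Differentiable.diffContOnCl fun t => (hline t).differentiableAt) fun t ht => hM _ <| by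
      rw [mem_sphere_zero_iff_norm] at ht
      rw [mem_closedBall, dist_eq_norm, add_sub_cancel_left, norm_smul, ht,
        div_mul_cancel₀ _ hv'.ne']
  rw [(hline 0).deriv, zero_smul, add_zero] at hdisc
  calc ‖fderiv ℂ g z v‖ ≤ M / (r / ‖v‖) := hdisc
    _ = M / r * ‖v‖ := by field_simp

theorem uniformCauchySeqOn_fderiv_of_tendstoUniformlyOn_cthickening {ι : Type*} {l : Filter ι}
    {f : ι → E → F} {g : E → F} (hf : ∀ i, Differentiable ℂ (f i)) {K : Set E} {r : ℝ}
    (hr : 0 < r) (hfg : TendstoUniformlyOn f g l (cthickening r K)) :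
    UniformCauchySeqOn (fun i => fderiv ℂ (f i)) l K := by
  intro U hU
  obtain ⟨ε, hε, hεU⟩ := Metric.mem_uniformity_dist.1 hU
  have hcauchy := hfg.uniformCauchySeqOn _ (dist_mem_uniformity (half_pos (mul_pos hε hr)))
  filter_upwards [hcauchy] with p hp z hz
  refine hεU (lt_of_le_of_lt ?_ (half_lt_self hε))
  have hbound : ∀ u ∈ closedBall z r, ‖(f p.1 - f p.2) u‖ ≤ ε * r / 2 := fun u hu => by
    rw [Pi.sub_apply, ← dist_eq_norm]
    exact (hp u (closedBall_subset_cthickening hz r hu)).le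
  have := norm_fderiv_le_of_forall_mem_closedBall_norm_le ((hf p.1).sub (hf p.2)) hr hbound
  rwa [fderiv_sub (hf p.1 z) (hf p.2 z), mul_div_right_comm, mul_div_cancel_right₀ _ hr.ne',
    ← dist_eq_norm] at this

variable [ProperSpace E] [CompleteSpace F]

theorem differentiable_and_tendstoUniformlyOn_fderiv {ι : Type*} {l : Filter ι} [l.NeBot]
    {f : ι → E → F} {g : E → F} (hf : ∀ i, Differentiable ℂ (f i))
    (hfg : ∀ K, IsCompact K → TendstoUniformlyOn f g l K) :
    Differentiable ℂ g ∧
      ∀ K, IsCompact K → TendstoUniformlyOn (fun i => fderiv ℂ (f i)) (fderiv ℂ g) l K := by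
  have hcauchy (K : Set E) (hK : IsCompact K) :
      UniformCauchySeqOn (fun i => fderiv ℂ (f i)) l K :=
    uniformCauchySeqOn_fderiv_of_tendstoUniformlyOn_cthickening hf one_pos
      (hfg _ hK.cthickening)
  choose L hL using fun z => cauchy_map_iff_exists_tendsto.1
    ((hcauchy {z} isCompact_singleton).cauchy_map (mem_singleton z))
  have hunif (K : Set E) (hK : IsCompact K) :
      TendstoUniformlyOn (fun i => fderiv ℂ (f i)) L l K :=
    (hcauchy K hK).tendstoUniformlyOn_of_tendsto fun z _ => hL z
  have hgL (z : E) : HasFDerivAt g (L z) z :=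
    hasFDerivAt_of_tendstoUniformlyOn isOpen_ball
      ((hunif _ (isCompact_closedBall z 1)).mono ball_subset_closedBall)
      (fun i x _ => (hf i x).hasFDerivAt)
      (fun x _ => (hfg {x} isCompact_singleton).tendsto_at rfl) (mem_ball_self one_pos)
  have hLg : fderiv ℂ g = L := funext fun z => (hgL z).fderiv
  exact ⟨fun z => (hgL z).differentiableAt, hLg ▸ hunif⟩

theorem Differentiable.continuous_fderiv {g : E → F} (hg : Differentiable ℂ g) :
    Continuous (fderiv ℂ g) := by
  let shift : C(E, C(E, F)) :=
    ContinuousMap.curry ⟨fun p : E × E => g (p.2 + p.1), hg.continuous.comp (by fun_prop)⟩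
  have hshift0 : ⇑(shift 0) = g := funext fun u => by simp [shift]
  have hshift : ∀ K, IsCompact K → TendstoUniformlyOn (fun c u => g (u + c)) g (𝓝 0) K := by
    have := ContinuousMap.tendsto_iff_forall_isCompact_tendstoUniformlyOn.1
      (shift.continuous.tendsto 0)
    rwa [hshift0] at this
  have hderiv := (differentiable_and_tendstoUniformlyOn_fderiv (f := fun c u => g (u + c))
    (fun c => hg.comp (differentiable_id.add_const c)) hshift).2
  refine continuous_iff_continuousAt.2 fun z => ?_
  -- `fderiv g (z + c)` is the derivative at `z` of the translate `g (· + c)`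
  have := (hderiv {z} isCompact_singleton).tendsto_at rfl
  simp only [fderiv_comp_add_right] at this
  rwa [ContinuousAt, ← map_add_left_nhds_zero z, tendsto_map'_iff]

end HolomorphicLimits

section LocalSurjectivity

variable {𝕜 E F : Type*} [NontriviallyNormedField 𝕜] [IsRCLikeNormedField 𝕜]
  [NormedAddCommGroup E] [NormedSpace ℝ E] [NormedSpace 𝕜 E]
  [NormedAddCommGroup F] [NormedSpace 𝕜 F]

theorem closedBall_subset_image_closedBall_of_norm_fderiv_sub_le [CompleteSpace E] {g : E → F}
    (A : E ≃L[𝕜] F) {M : ℝ} (hM : ‖(A.symm : F →L[𝕜] E)‖ ≤ M) {y : E} {r : ℝ} (hr : 0 ≤ r)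
    (hg : ∀ u ∈ closedBall y r, DifferentiableAt 𝕜 g u)
    (hgA : ∀ u ∈ closedBall y r, ‖fderiv 𝕜 g u - A‖ ≤ (2 * M)⁻¹) :
    closedBall (g y) (r / (2 * M)) ⊆ g '' closedBall y r := by
  have hM0 : 0 ≤ M := (norm_nonneg _).trans hM
  let Ainv : (A : E →L[𝕜] F).NonlinearRightInverse :=
    { toFun := A.symm
      nnnorm := ⟨M, hM0⟩
      bound' := fun v => (A.symm : F →L[𝕜] E).le_of_opNorm_le hM v
      right_inv' := A.apply_symm_apply }
  have happrox :
      ApproximatesLinearOn g (A : E →L[𝕜] F) (closedBall y r) ⟨(2 * M)⁻¹, by positivity⟩ :=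
    fun u hu v hv => (convex_closedBall y r).norm_image_sub_le_of_norm_fderiv_le' hg hgA hv hu
  refine (closedBall_subset_closedBall (le_of_eq ?_)).trans
    (happrox.surjOn_closedBall_of_nonlinearRightInverse Ainv hr Subset.rfl)
  change r / (2 * M) = (M⁻¹ - (2 * M)⁻¹) * r
  ring

variable [ProperSpace E]

theorem IsCompact.exists_closedBall_subset_image_of_fderiv_near {g₀ : E → F}
    (hg₀ : Continuous (fderiv 𝕜 g₀)) (hinv : ∀ x, (fderiv 𝕜 g₀ x).IsInvertible)
    {K : Set E} (hK : IsCompact K) {ε : ℝ} (hε : 0 < ε) :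
    ∃ ρ > 0, ∃ δ > 0, ∀ g : E → F, Differentiable 𝕜 g →
      (∀ u ∈ cthickening ε K, ‖fderiv 𝕜 g u - fderiv 𝕜 g₀ u‖ ≤ δ) →
      ∀ y ∈ K, closedBall (g y) ρ ⊆ g '' closedBall y ε := by
  have hK' : IsCompact (cthickening ε K) := hK.cthickening
  obtain ⟨C, hC⟩ := hK'.exists_bound_of_continuousOn (f := fun x => (fderiv 𝕜 g₀ x).inverse)
    fun x _ => ((hinv x).contDiffAt_map_inverse (n := 0)).continuousAt.comp
      hg₀.continuousAt |>.continuousWithinAt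
  set M := max C 1
  have hM : 0 < M := lt_max_of_lt_right one_pos
  obtain ⟨δ₀, hδ₀, hg₀unif⟩ := Metric.uniformContinuousOn_iff.1
    (hK'.uniformContinuousOn_of_continuous hg₀.continuousOn) (4 * M)⁻¹ (by positivity)
  set r := min ε (δ₀ / 2)
  -- on `closedBall y r` the derivative `fderiv 𝕜 g` is `(2 * M)⁻¹`-close to `fderiv 𝕜 g₀ y`,
  -- whose inverse has norm at most `M`
  have hr : 0 < r := lt_min hε (half_pos hδ₀)
  refine ⟨r / (2 * M), by positivity, (4 * M)⁻¹, by positivity, fun g hg hgg₀ y hy => ?_⟩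
  have hyr : closedBall y r ⊆ cthickening ε K :=
    (closedBall_subset_closedBall (min_le_left _ _)).trans (closedBall_subset_cthickening hy ε)
  obtain ⟨A, hA⟩ := hinv y
  refine (closedBall_subset_image_closedBall_of_norm_fderiv_sub_le A (M := M) ?_ hr.le
    (fun u _ => hg u) fun u hu => ?_).trans
    (image_mono (closedBall_subset_closedBall (min_le_left _ _)))
  · rw [← ContinuousLinearMap.inverse_equiv, hA]
    exact (hC y (hyr (mem_closedBall_self hr.le))).trans (le_max_left _ _)
  · have hu₀ : dist u y < δ₀ :=
      (mem_closedBall.1 hu).trans_lt ((min_le_right _ _).trans_lt (half_lt_self hδ₀))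
    rw [hA]
    calc ‖fderiv 𝕜 g u - fderiv 𝕜 g₀ y‖
        ≤ ‖fderiv 𝕜 g u - fderiv 𝕜 g₀ u‖ + ‖fderiv 𝕜 g₀ u - fderiv 𝕜 g₀ y‖ :=
          norm_sub_le_norm_sub_add_norm_sub _ _ _
      _ ≤ (4 * M)⁻¹ + (4 * M)⁻¹ := by
          gcongr
          · exact hgg₀ u (hyr hu)
          · rw [← dist_eq_norm]
            exact (hg₀unif u (hyr hu) y (hyr (mem_closedBall_self hr.le)) hu₀).le
      _ = (2 * M)⁻¹ := by ring

theorem IsCompact.exists_closedBall_subset_image {g : E → F}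
    (hg : Differentiable 𝕜 g) (hg' : Continuous (fderiv 𝕜 g))
    (hinv : ∀ x, (fderiv 𝕜 g x).IsInvertible) {K : Set E} (hK : IsCompact K) {ε : ℝ}
    (hε : 0 < ε) : ∃ ρ > 0, ∀ y ∈ K, closedBall (g y) ρ ⊆ g '' closedBall y ε := by
  obtain ⟨ρ, hρ, δ, hδ, hsurj⟩ := hK.exists_closedBall_subset_image_of_fderiv_near hg' hinv hε
  exact ⟨ρ, hρ, hsurj g hg fun u _ => by simpa using hδ.le⟩

theorem continuousAt_invFun_of_fderiv_isInvertible {g : E → F}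
    (hg : Differentiable 𝕜 g) (hg' : Continuous (fderiv 𝕜 g))
    (hinv : ∀ x, (fderiv 𝕜 g x).IsInvertible) (hinj : Injective g) (x : E) :
    ContinuousAt (invFun g) (g x) := by
  refine Metric.continuousAt_iff.2 fun ε hε => ?_
  obtain ⟨ρ, hρ, hsurj⟩ :=
    isCompact_singleton.exists_closedBall_subset_image hg hg' hinv (half_pos hε)
  refine ⟨ρ, hρ, fun {w} hw => ?_⟩
  obtain ⟨u, hu, rfl⟩ := hsurj x rfl (mem_closedBall.2 hw.le)
  rw [leftInverse_invFun hinj, leftInverse_invFun hinj]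
  exact (mem_closedBall.1 hu).trans_lt (half_lt_self hε)

end LocalSurjectivity

section SequencesOfBijections

variable {𝕜 E F : Type*} [NontriviallyNormedField 𝕜] [IsRCLikeNormedField 𝕜]
  [NormedAddCommGroup E] [NormedSpace ℝ E] [NormedSpace 𝕜 E] [ProperSpace E]
  [NormedAddCommGroup F] [NormedSpace 𝕜 F] {ι : Type*} {l : Filter ι} {f : ι → E ≃ F} {g : E → F}

theorem eventually_mapsTo_symm_closedBall (hf : ∀ i, Differentiable 𝕜 (f i))
    (hfg : ∀ K, IsCompact K → TendstoUniformlyOn (fun i => ⇑(f i)) g l K)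
    (hf'g' : ∀ K, IsCompact K → TendstoUniformlyOn (fun i => fderiv 𝕜 (f i)) (fderiv 𝕜 g) l K)
    (hg' : Continuous (fderiv 𝕜 g)) (hinv : ∀ x, (fderiv 𝕜 g x).IsInvertible)
    {K : Set E} (hK : IsCompact K) {ε : ℝ} (hε : 0 < ε) :
    ∃ ρ > 0, ∀ᶠ i in l, ∀ y ∈ K, MapsTo (f i).symm (closedBall (g y) ρ) (closedBall y ε) := by
  obtain ⟨ρ, hρ, δ, hδ, hsurj⟩ := hK.exists_closedBall_subset_image_of_fderiv_near hg' hinv hε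
  refine ⟨ρ / 2, half_pos hρ, ?_⟩
  filter_upwards [Metric.tendstoUniformlyOn_iff.1 (hf'g' _ hK.cthickening) δ hδ,
    Metric.tendstoUniformlyOn_iff.1 (hfg K hK) (ρ / 2) (half_pos hρ)] with i hf'i hfi y hy w hw
  have hw' : w ∈ closedBall (f i y) ρ := by
    rw [mem_closedBall] at hw ⊢
    linarith [dist_triangle w (g y) (f i y), hfi y hy]
  obtain ⟨u, hu, rfl⟩ := hsurj (f i) (hf i) (fun u hu => by
    rw [norm_sub_rev, ← dist_eq_norm]; exact (hf'i u hu).le) y hy hw'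
  simpa using hu

theorem injective_of_tendstoUniformlyOn [l.NeBot] (hf : ∀ i, Differentiable 𝕜 (f i))
    (hfg : ∀ K, IsCompact K → TendstoUniformlyOn (fun i => ⇑(f i)) g l K)
    (hf'g' : ∀ K, IsCompact K → TendstoUniformlyOn (fun i => fderiv 𝕜 (f i)) (fderiv 𝕜 g) l K)
    (hg' : Continuous (fderiv 𝕜 g)) (hinv : ∀ x, (fderiv 𝕜 g x).IsInvertible) :
    Injective g := by
  intro a b hab
  by_contra hne
  obtain ⟨ρ, hρ, hmaps⟩ := eventually_mapsTo_symm_closedBall hf hfg hf'g' hg' hinv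
    (Set.toFinite {a, b}).isCompact (div_pos (dist_pos.2 hne) three_pos)
  obtain ⟨i, hi⟩ := hmaps.exists
  have ha := hi a (by simp) (mem_closedBall_self hρ.le)
  have hb := hi b (by simp) (mem_closedBall_self hρ.le)
  rw [← hab, mem_closedBall] at hb
  rw [mem_closedBall] at ha
  linarith [dist_triangle_left a b ((f i).symm (g a)), dist_pos.2 hne]

theorem tendstoUniformlyOn_symm_invFun (hf : ∀ i, Differentiable 𝕜 (f i))
    (hfg : ∀ K, IsCompact K → TendstoUniformlyOn (fun i => ⇑(f i)) g l K)
    (hf'g' : ∀ K, IsCompact K → TendstoUniformlyOn (fun i => fderiv 𝕜 (f i)) (fderiv 𝕜 g) l K)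
    (hg : Differentiable 𝕜 g) (hg' : Continuous (fderiv 𝕜 g))
    (hinv : ∀ x, (fderiv 𝕜 g x).IsInvertible) (hinj : Injective g) {C : Set F}
    (hCg : C ⊆ range g) (hC : IsCompact C) :
    TendstoUniformlyOn (fun i => ⇑(f i).symm) (invFun g) l C := by
  have hK : IsCompact (invFun g '' C) := hC.image_of_continuousOn fun w hw => by
    obtain ⟨x, rfl⟩ := hCg hw
    exact (continuousAt_invFun_of_fderiv_isInvertible hg hg' hinv hinj x).continuousWithinAt
  refine Metric.tendstoUniformlyOn_iff.2 fun ε hε => ?_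
  obtain ⟨ρ, hρ, hmaps⟩ :=
    eventually_mapsTo_symm_closedBall hf hfg hf'g' hg' hinv hK (half_pos hε)
  filter_upwards [hmaps] with i hi w hw
  have hgw : g (invFun g w) = w := invFun_eq (hCg hw)
  have := hi _ (mem_image_of_mem _ hw) (by rw [hgw]; exact mem_closedBall_self hρ.le)
  rw [mem_closedBall, dist_comm] at this
  exact this.trans_lt (half_lt_self hε)

theorem eventually_le_norm_symm_of_notMem_range
    (hfg : ∀ K, IsCompact K → TendstoUniformlyOn (fun i => ⇑(f i)) g l K)
    (hg : Differentiable 𝕜 g) (hg' : Continuous (fderiv 𝕜 g))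
    (hinv : ∀ x, (fderiv 𝕜 g x).IsInvertible) (R : ℝ) :
    ∀ᶠ i in l, ∀ z ∉ range g, R ≤ ‖(f i).symm z‖ := by
  obtain ⟨ρ, hρ, hsurj⟩ :=
    (isCompact_closedBall (0 : E) R).exists_closedBall_subset_image hg hg' hinv one_pos
  filter_upwards [Metric.tendstoUniformlyOn_iff.1 (hfg _ (isCompact_closedBall 0 R)) ρ hρ]
    with i hi z hz
  by_contra! hlt
  have hx : (f i).symm z ∈ closedBall 0 R := by simpa using hlt.le
  have hz' : z ∈ closedBall (g ((f i).symm z)) ρ := by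
    simpa [dist_comm] using (hi _ hx).le
  obtain ⟨u, -, hu⟩ := hsurj _ hx hz'
  exact hz ⟨u, hu⟩

end SequencesOfBijections

theorem stmt5_general (k : ℕ) (f : ℕ → ((Fin k → ℂ) ≃ (Fin k → ℂ)))
    (hdiff : ∀ n, Differentiable ℂ (f n))
    (hdet : ∀ n, ∀ z : Fin k → ℂ, LinearMap.det (fderiv ℂ (⇑(f n)) z).toLinearMap = 1)
    (F : (Fin k → ℂ) → (Fin k → ℂ))
    (hconv : ∀ C : Set (Fin k → ℂ), IsCompact C →
      TendstoUniformlyOn (fun n => ⇑(f n)) F Filter.atTop C) :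
    Function.Injective F ∧ Differentiable ℂ F ∧
    (∃ G : (Fin k → ℂ) → (Fin k → ℂ), (∀ z : Fin k → ℂ, G (F z) = z) ∧
      ∀ C : Set (Fin k → ℂ), C ⊆ Set.range F → IsCompact C →
        TendstoUniformlyOn (fun n => ⇑(f n).symm) G Filter.atTop C) ∧
    (∀ R : ℝ, ∃ N : ℕ, ∀ n ≥ N, ∀ z : Fin k → ℂ, z ∉ Set.range F → R ≤ ‖(f n).symm z‖) := by
  obtain ⟨hF, hF'⟩ := differentiable_and_tendstoUniformlyOn_fderiv hdiff hconv
  have hinv (z : Fin k → ℂ) : (fderiv ℂ F z).IsInvertible := by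
    have hdetF : (fderiv ℂ F z).det = 1 :=
      (isClosed_eq ContinuousLinearMap.continuous_det continuous_const).mem_of_tendsto
        ((hF' {z} isCompact_singleton).tendsto_at rfl) (Eventually.of_forall (hdet · z))
    exact ⟨_, ContinuousLinearMap.coe_toContinuousLinearEquivOfDetNeZero _ (by simp [hdetF])⟩
  have hF'c := hF.continuous_fderiv
  have hinj := injective_of_tendstoUniformlyOn hdiff hconv hF' hF'c hinv
  exact ⟨hinj, hF, ⟨invFun F, leftInverse_invFun hinj, fun C hCF hC =>
      tendstoUniformlyOn_symm_invFun hdiff hconv hF' hF hF'c hinv hinj hCF hC⟩,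
    fun R => eventually_atTop.1 (eventually_le_norm_symm_of_notMem_range hconv hF hF'c hinv R)⟩

/-- Lemma 2.1 of the paper, after Dixon–Esterle: properties of the limit
of a sequence of volume-preserving automorphisms of `ℂ^k`. -/
theorem stmt5 (k : ℕ) (hk : 2 ≤ k) (f : ℕ → ((Fin k → ℂ) ≃ (Fin k → ℂ)))
    (hdiff : ∀ n, Differentiable ℂ (f n)) (hdiffinv : ∀ n, Differentiable ℂ (f n).symm)
    (hdet : ∀ n, ∀ z : Fin k → ℂ, LinearMap.det (fderiv ℂ (⇑(f n)) z).toLinearMap = 1)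
    (F : (Fin k → ℂ) → (Fin k → ℂ))
    (hconv : ∀ C : Set (Fin k → ℂ), IsCompact C →
      TendstoUniformlyOn (fun n => ⇑(f n)) F Filter.atTop C) :
    Function.Injective F ∧ Differentiable ℂ F ∧
    (∃ G : (Fin k → ℂ) → (Fin k → ℂ), (∀ z : Fin k → ℂ, G (F z) = z) ∧
      ∀ C : Set (Fin k → ℂ), C ⊆ Set.range F → IsCompact C →
        TendstoUniformlyOn (fun n => ⇑(f n).symm) G Filter.atTop C) ∧
    (∀ R : ℝ, ∃ N : ℕ, ∀ n ≥ N, ∀ z : Fin k → ℂ, z ∉ Set.range F → R ≤ ‖(f n).symm z‖) :=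
  stmt5_general k f hdiff hdet F hconv
end

section
/- Ω ∩ {z ∈ ℂ^k : Re π_j(z) > 0 for all 1 ≤ j ≤ k} = ∅. -/
/-- The total extension of the piecewise translation `P^n` of the paper: on the region
`Y^n(i_1,…,i_k)` it subtracts the vector `(i_k, i_1, …, i_{k-1})`, where for `1 ≤ j ≤ k-1`
one has `i_j = 1` iff `Re z_j > n`, and `i_k = 1` iff `Re z_k > c` with `c = n` if
`i_{k-1} = 1` and `c = n - 1` otherwise. -/
noncomputable def Pfull (k : ℕ) (n : ℕ) (z : Fin k → ℂ) : Fin k → ℂ := fun t =>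
  if (t : ℕ) = 0 then
    z t - (if ((if (n : ℝ) < (z ⟨k - 2, Nat.sub_lt t.pos (by norm_num)⟩).re then (n : ℝ)
        else (n : ℝ) - 1) < (z ⟨k - 1, Nat.sub_lt t.pos (by norm_num)⟩).re) then 1 else 0)
  else
    z t - (if (n : ℝ) < (z ⟨(t : ℕ) - 1, Nat.lt_of_le_of_lt (Nat.sub_le _ _) t.isLt⟩).re
      then 1 else 0)

/-- For `z ∈ Δ(l_1,…,l_k)` this computes `l_z = max {l_1,…,l_k}`. -/
noncomputable def lmax (k : ℕ) (z : Fin k → ℂ) : ℕ :=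
  Finset.univ.sup fun t : Fin k =>
    if (t : ℕ) = k - 1 then (⌈(z t).re⌉).toNat else max 1 (⌈(z t).re⌉).toNat

/-- `Scomp k n = P^1 ∘ P^2 ∘ ⋯ ∘ P^n` (total extensions). -/
noncomputable def Scomp (k : ℕ) : ℕ → (Fin k → ℂ) → (Fin k → ℂ)
  | 0 => id
  | n + 1 => Scomp k n ∘ Pfull k (n + 1)

/-- The map `S = P^1 ∘ P^2 ∘ ⋯ ∘ P^{l_z}`. -/
noncomputable def Sfull (k : ℕ) (z : Fin k → ℂ) : Fin k → ℂ := Scomp k (lmax k z) z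

/-- The cell `Δ(l_1,…,l_k)`; the last index is allowed to be `0`. -/
def DeltaSet (k : ℕ) (l : Fin k → ℕ) : Set (Fin k → ℂ) :=
  {z | ∀ t : Fin k,
    if (t : ℕ) = k - 1 then
      (if l t = 0 then (z t).re < 0 else ((l t : ℝ) - 1 < (z t).re ∧ (z t).re < l t))
    else
      (if l t ≤ 1 then (z t).re < 1 else ((l t : ℝ) - 1 < (z t).re ∧ (z t).re < l t))}

/-- `Δ̃`, the union of all the cells `Δ(l_1,…,l_k)` with `l_j ≥ 1` for `j ≤ k-1`, `l_k ≥ 0`. -/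
def DeltaTilde (k : ℕ) : Set (Fin k → ℂ) :=
  ⋃ l ∈ {l : Fin k → ℕ | ∀ t : Fin k, (t : ℕ) ≠ k - 1 → 1 ≤ l t}, DeltaSet k l

/-!
Every point of `Δ̃` avoids the cell walls `Re z_j = m` (`m ≥ 1`, or `m ≥ 0` for the last
coordinate), and since each `P^n` subtracts `0` or `1` from every coordinate, so do all
iterates. For such a point with some `Re z_j < n`, the map `P^n` produces a coordinate with real
part `< n - 1`: if some coordinate lies above `n`, going cyclically backwards from one below `n`
we meet a coordinate below `n` whose predecessor lies above `n`, and `P^n` lowers it by one; if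
all coordinates lie below `n`, the last one is either below `n - 1` already or above `n - 1`,
and then `P^n` lowers the first. Since `Re z_1 < l_z` on `Δ̃`, applying `P^{l_z}, …, P^1` leaves
some coordinate with negative real part.
-/

lemma Fin.sub_one_of_val_eq_zero {k : ℕ} [NeZero k] {t : Fin k} (ht : (t : ℕ) = 0) :
    t - 1 = ⟨k - 1, Nat.sub_lt (Nat.pos_of_neZero k) Nat.one_pos⟩ := by
  obtain ⟨m, rfl⟩ := Nat.exists_eq_succ_of_ne_zero (NeZero.ne k)
  obtain rfl : t = 0 := Fin.ext ht
  ext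
  simp

lemma Fin.sub_one_of_val_ne_zero {k : ℕ} [NeZero k] {t : Fin k} (ht : (t : ℕ) ≠ 0) :
    t - 1 = ⟨t - 1, by omega⟩ :=
  Fin.ext (Fin.val_sub_one_of_ne_zero fun h => ht (by simp [h]))

open Fin.NatCast in
lemma Fin.exists_and_not_sub_one {k : ℕ} [NeZero k] {p : Fin k → Prop} {a b : Fin k}
    (ha : p a) (hb : ¬ p b) : ∃ j, p j ∧ ¬ p (j - 1) := by
  by_contra! h
  have hsub : ∀ i : ℕ, p (a - i) := by
    intro i
    induction i with
    | zero => simpa using ha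
    | succ i ih => simpa [sub_add_eq_sub_sub] using h _ ih
  exact hb (by simpa using hsub (a - b).val)

section
variable {k n : ℕ} {z : Fin k → ℂ}

def OffCellWalls (z : Fin k → ℂ) : Prop :=
  ∀ (t : Fin k) (m : ℕ), ((t : ℕ) = k - 1 ∨ 1 ≤ m) → (z t).re ≠ m

lemma Pfull_apply_eq_or (n : ℕ) (z : Fin k → ℂ) (t : Fin k) :
    Pfull k n z t = z t ∨ Pfull k n z t = z t - 1 := by
  unfold Pfull
  split_ifs <;> simp

lemma re_Pfull_apply_le (t : Fin k) : (Pfull k n z t).re ≤ (z t).re := by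
  rcases Pfull_apply_eq_or n z t with h | h <;> simp [h]

lemma OffCellWalls.Pfull (hz : OffCellWalls z) (n : ℕ) : OffCellWalls (Pfull k n z) := by
  intro t m hm
  rcases Pfull_apply_eq_or n z t with h | h
  · rw [h]
    exact hz t m hm
  · have := hz t (m + 1) (by omega)
    rw [h, Complex.sub_re, Complex.one_re]
    push_cast at this
    contrapose! this
    linarith

lemma Pfull_apply_eq_sub_one_of_lt [NeZero k] {t : Fin k} (h : (n : ℝ) < (z (t - 1)).re) :
    Pfull k n z t = z t - 1 := by
  by_cases ht : (t : ℕ) = 0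
  · rw [Fin.sub_one_of_val_eq_zero ht] at h
    have hc : (if (n : ℝ) < (z ⟨k - 2, by omega⟩).re then (n : ℝ) else n - 1) ≤ n := by
      split_ifs <;> linarith
    simp only [Pfull, ht, if_true, if_pos (hc.trans_lt h)]
  · rw [Fin.sub_one_of_val_ne_zero ht] at h
    simp only [Pfull, ht, if_false, if_pos h]

lemma Pfull_apply_eq_sub_one_of_forall_lt [NeZero k] {t : Fin k} (ht : (t : ℕ) = 0)
    (hz : ∀ u, (z u).re < n) (h : (n : ℝ) - 1 < (z (t - 1)).re) :
    Pfull k n z t = z t - 1 := by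
  rw [Fin.sub_one_of_val_eq_zero ht] at h
  simp only [Pfull, ht, if_true, if_neg (hz _).not_gt, if_pos h]

lemma exists_re_Pfull_lt_sub_one [NeZero k] (hn : 1 ≤ n) (hz : OffCellWalls z)
    (h : ∃ j, (z j).re < n) : ∃ j, (Pfull k n z j).re < n - 1 := by
  have hwall : ∀ u, (z u).re ≠ n := fun u => hz u n (Or.inr hn)
  by_cases hall : ∀ u, (z u).re < n
  · set t : Fin k := ⟨0, Nat.pos_of_neZero k⟩
    by_cases hlast : (z (t - 1)).re < n - 1
    · exact ⟨t - 1, (re_Pfull_apply_le _).trans_lt hlast⟩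
    · have hlast_ne : (z (t - 1)).re ≠ (n - 1 : ℕ) :=
        hz _ _ (Or.inl (by rw [Fin.sub_one_of_val_eq_zero rfl]))
      push_cast [hn] at hlast_ne
      have hlast_gt := lt_of_le_of_ne (not_lt.1 hlast) hlast_ne.symm
      refine ⟨t, ?_⟩
      rw [Pfull_apply_eq_sub_one_of_forall_lt rfl hall hlast_gt, Complex.sub_re, Complex.one_re]
      linarith [hall t]
  · push Not at hall
    obtain ⟨a, ha⟩ := h
    obtain ⟨b, hb⟩ := hall
    obtain ⟨j, hj, hpred⟩ :=
      Fin.exists_and_not_sub_one (p := fun u => (z u).re < n) ha hb.not_gt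
    refine ⟨j, ?_⟩
    rw [Pfull_apply_eq_sub_one_of_lt (lt_of_le_of_ne (not_lt.1 hpred) (hwall _).symm),
      Complex.sub_re, Complex.one_re]
    linarith

lemma exists_re_Scomp_neg [NeZero k] (m : ℕ) (hz : OffCellWalls z) (h : ∃ j, (z j).re < m) :
    ∃ j, (Scomp k m z j).re < 0 := by
  induction m generalizing z with
  | zero => simpa [Scomp] using h
  | succ m ih =>
    obtain ⟨j, hj⟩ := exists_re_Pfull_lt_sub_one (n := m + 1) (by omega) hz (by exact_mod_cast h)
    exact ih (hz.Pfull _) ⟨j, by simpa using hj⟩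

lemma ne_natCast_of_mem_Ioo {x : ℝ} {l m : ℕ} (hx : x ∈ Set.Ioo ((l : ℝ) - 1) l) :
    x ≠ m := by
  rintro rfl
  have hl : l < m + 1 := by exact_mod_cast (by linarith [hx.1] : (l : ℝ) < m + 1)
  have hm : m < l := by exact_mod_cast hx.2
  omega

lemma offCellWalls_of_mem_DeltaSet {l : Fin k → ℕ} (hz : z ∈ DeltaSet k l) : OffCellWalls z := by
  intro t m hm
  have hzt := hz t
  split_ifs at hzt with hlast hl hl
  · exact (hzt.trans_le (Nat.cast_nonneg m)).ne
  · exact ne_natCast_of_mem_Ioo hzt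
  · have : (1 : ℝ) ≤ m := by exact_mod_cast hm.resolve_left hlast
    exact (hzt.trans_le this).ne
  · exact ne_natCast_of_mem_Ioo hzt

lemma max_one_le_lmax {t : Fin k} (ht : (t : ℕ) ≠ k - 1) :
    max 1 (⌈(z t).re⌉).toNat ≤ lmax k z := by
  unfold lmax
  refine le_trans ?_ (Finset.le_sup (Finset.mem_univ t))
  simp [ht]

lemma re_lt_lmax (hz : OffCellWalls z) {t : Fin k} (ht : (t : ℕ) ≠ k - 1) :
    (z t).re < lmax k z := by
  have hle := max_one_le_lmax (z := z) ht
  refine lt_of_le_of_ne ?_ (hz t _ (Or.inr (le_of_max_le_left hle)))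
  calc (z t).re ≤ ⌈(z t).re⌉ := Int.le_ceil _
    _ ≤ (⌈(z t).re⌉).toNat := by exact_mod_cast Int.self_le_toNat _
    _ ≤ lmax k z := by exact_mod_cast le_of_max_le_right hle

end

/-- Lemma 2.3 of the paper: `Ω = S(Δ̃)` misses the positive octant. -/
theorem stmt7 (k : ℕ) (hk : 2 ≤ k) :
    (Sfull k '' DeltaTilde k) ∩ {z : Fin k → ℂ | ∀ j : Fin k, 0 < (z j).re} = ∅ := by
  have : NeZero k := ⟨by omega⟩
  rw [Set.eq_empty_iff_forall_notMem]
  rintro _ ⟨⟨z, hz, rfl⟩, hpos⟩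
  simp only [DeltaTilde, Set.mem_iUnion] at hz
  obtain ⟨l, -, hzl⟩ := hz
  have hwalls := offCellWalls_of_mem_DeltaSet hzl
  obtain ⟨j, hj⟩ := exists_re_Scomp_neg (lmax k z) hwalls
    ⟨⟨0, by omega⟩, re_lt_lmax hwalls (t := ⟨0, by omega⟩) (show 0 ≠ k - 1 by omega)⟩
  exact (hpos j).not_gt hj
end
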